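/- arXiv:2206.00778 — 3 statements merged into one kernel-verified Lean document; each statement's English description precedes it below -/
import Mathlib

section
/- Let N = 2^t with t ≥ 1 an integer and let α ∈ ℂ. Then the scaled delay Vandermonde matrix satisfies the factorization Ã_{N,α} = P_N^T · diag(Ã_{N/2,α²}, Ã_{N/2,α²}) · B, where B is the N×N block matrix B = [[I_{N/2}, C_{N/2}^{N/2}], [D̃_{N/2}, α^{N/2}·C_{N/2}^{N/2}·D̃_{N/2}]], with I_{N/2} the identity matrix, D̃_{N/2} = diag(α^l)_{l=0}^{N/2−1}, and C_{N/2} the companion matrix of p(z) = ∏_{k=0}^{N/2−1}(z − α^{2k}). -/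
open Matrix

/-- Scaled delay Vandermonde matrix: `(k,l)` entry `α ^ (k*l)` for `0 ≤ k,l ≤ N-1`. -/
def sDVM (N : ℕ) (α : ℂ) : Matrix (Fin N) (Fin N) ℂ :=
  Matrix.of fun k l => α ^ ((k : ℕ) * (l : ℕ))

/-- Even-odd permutation matrix of size `N` (with `N = n + n`): it maps a vector
`(x_0, x_1, …, x_{N-1})` to `(x_0, x_2, …, x_{N-2}, x_1, x_3, …, x_{N-1})`. -/
def evenOddPerm (N n : ℕ) : Matrix (Fin N) (Fin N) ℂ :=
  Matrix.of fun i j =>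
    if (j : ℕ) = (if (i : ℕ) < n then 2 * (i : ℕ) else 2 * ((i : ℕ) - n) + 1) then 1 else 0

/-- Companion matrix of the monic polynomial `z^n + ∑ i, w i * z^i`: ones on the
subdiagonal, last column `(-w 0, …, -w (n-1))ᵀ`, zeros elsewhere. -/
def companion (n : ℕ) (w : Fin n → ℂ) : Matrix (Fin n) (Fin n) ℂ :=
  Matrix.of fun i j =>
    if (i : ℕ) = (j : ℕ) + 1 then 1 else if (j : ℕ) = n - 1 then -w i else 0


/-! If `x` is a root of `p`, multiplying the row `(1, x, …, x^(n-1))` by the companion matrix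
`C` of `p` shifts it to `(x, …, x^n)`; hence `(1, x, …, x^(n-1)) C^m = (x^m, …, x^(n-1+m))`.
The nodes `α^(2k)` of `Ã_{n,α²}` are the roots of `p`, so `Ã_{n,α²} C^n` has entries
`α^(2k(l+n))`. Consequently `diag(Ã_{n,α²}, Ã_{n,α²}) B` has the rows `(α^(2k·j))_j` on top and
`(α^((2k+1)·j))_j` below, i.e. the even rows of `Ã_{N,α}` followed by its odd rows, and `P_Nᵀ`
interleaves them back. -/

lemma vecMul_companion {n : ℕ} {w : Fin n → ℂ} {x : ℂ}
    (hx : x ^ n + ∑ i : Fin n, w i * x ^ (i : ℕ) = 0) :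
    (fun l : Fin n => x ^ (l : ℕ)) ᵥ* companion n w = fun l : Fin n => x ^ ((l : ℕ) + 1) := by
  funext j
  simp only [vecMul, dotProduct, companion, of_apply]
  by_cases hj : (j : ℕ) = n - 1
  · have hterm : ∀ i : Fin n, (x ^ (i : ℕ) *
        if (i : ℕ) = j + 1 then 1 else if (j : ℕ) = n - 1 then -w i else 0) =
        -(w i * x ^ (i : ℕ)) := fun i => by
      rw [if_neg (by omega), if_pos hj]; ring
    rw [Finset.sum_congr rfl fun i _ => hterm i, Finset.sum_neg_distrib,
      show (j : ℕ) + 1 = n by omega]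
    linear_combination (-1 : ℂ) * hx
  · have hj' : (j : ℕ) + 1 < n := by omega
    rw [Finset.sum_eq_single ⟨(j : ℕ) + 1, hj'⟩]
    · simp
    · intro i _ hi
      have : (i : ℕ) ≠ j + 1 := fun h => hi (Fin.ext h)
      simp [this, hj]
    · simp

lemma vecMul_companion_pow {n : ℕ} {w : Fin n → ℂ} {x : ℂ}
    (hx : x ^ n + ∑ i : Fin n, w i * x ^ (i : ℕ) = 0) (m : ℕ) :
    (fun l : Fin n => x ^ (l : ℕ)) ᵥ* companion n w ^ m =
      fun l : Fin n => x ^ ((l : ℕ) + m) := by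
  induction m with
  | zero => simp
  | succ m ih =>
    have hshift :
        (fun l : Fin n => x ^ ((l : ℕ) + m)) = x ^ m • fun l : Fin n => x ^ (l : ℕ) := by
      funext l; simp [pow_add, mul_comm]
    rw [pow_succ, ← vecMul_vecMul, ih, hshift, smul_vecMul, vecMul_companion hx]
    funext l; simp only [Pi.smul_apply, smul_eq_mul]; ring

lemma vandermonde_mul_companion_pow {n : ℕ} {w : Fin n → ℂ} {v : Fin n → ℂ}
    (hv : ∀ k, v k ^ n + ∑ i : Fin n, w i * v k ^ (i : ℕ) = 0) (m : ℕ) :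
    vandermonde v * companion n w ^ m = of fun k l : Fin n => v k ^ ((l : ℕ) + m) := by
  ext k l
  rw [mul_apply_eq_vecMul]
  exact congrFun (vecMul_companion_pow (hv k) m) l

lemma sDVM_eq_vandermonde (n : ℕ) (β : ℂ) :
    sDVM n β = vandermonde fun k : Fin n => β ^ (k : ℕ) := by
  ext k l
  simp [sDVM, vandermonde, pow_mul]

lemma sDVM_sq_mul_companion_pow {n : ℕ} {α : ℂ} {w : Fin n → ℂ}
    (hw : ∀ z : ℂ, ∏ k : Fin n, (z - α ^ (2 * (k : ℕ))) =
      z ^ n + ∑ i : Fin n, w i * z ^ (i : ℕ)) (m : ℕ) :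
    sDVM n (α ^ 2) * companion n w ^ m =
      of fun k l : Fin n => α ^ (2 * (k : ℕ) * ((l : ℕ) + m)) := by
  have hroot (k : Fin n) :
      ((α ^ 2) ^ (k : ℕ)) ^ n + ∑ i : Fin n, w i * ((α ^ 2) ^ (k : ℕ)) ^ (i : ℕ) = 0 := by
    rw [← hw, ← pow_mul]
    exact Finset.prod_eq_zero (Finset.mem_univ k) (sub_self _)
  rw [sDVM_eq_vandermonde, vandermonde_mul_companion_pow hroot]
  ext k l
  simp only [of_apply, ← pow_mul, mul_assoc]

def evenOddIndex (n i : ℕ) : ℕ := if i < n then 2 * i else 2 * (i - n) + 1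

lemma evenOddPerm_apply (N n : ℕ) (i j : Fin N) :
    evenOddPerm N n i j = if (j : ℕ) = evenOddIndex n i then 1 else 0 :=
  rfl

lemma existsUnique_evenOddIndex_eq {N n : ℕ} (hNn : N = n + n) (i : Fin N) :
    ∃! j : Fin N, evenOddIndex n j = i := by
  obtain ⟨a, ha | ha⟩ := Nat.even_or_odd' (i : ℕ)
  · refine ⟨⟨a, by omega⟩, by simp only [evenOddIndex]; split_ifs <;> omega,
      fun j hj => Fin.ext ?_⟩
    simp only [evenOddIndex] at hj
    split_ifs at hj <;> simp <;> omega
  · refine ⟨⟨n + a, by omega⟩, by simp only [evenOddIndex]; split_ifs <;> omega,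
      fun j hj => Fin.ext ?_⟩
    simp only [evenOddIndex] at hj
    split_ifs at hj <;> simp <;> omega

lemma evenOddPerm_transpose_mul {N n : ℕ} (hNn : N = n + n) (f : ℕ → Fin N → ℂ) :
    (evenOddPerm N n)ᵀ * of (fun (j : Fin N) l => f (evenOddIndex n j) l) =
      of fun (i : Fin N) l => f i l := by
  ext i l
  obtain ⟨j₀, hj₀, huniq⟩ := existsUnique_evenOddIndex_eq hNn i
  rw [mul_apply, Finset.sum_eq_single j₀]
  · simp [evenOddPerm_apply, ← hj₀]
  · intro j _ hj
    have : (i : ℕ) ≠ evenOddIndex n j := fun h => hj (huniq j h.symm)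
    simp [evenOddPerm_apply, this]
  · simp

lemma fromBlocks_sDVM_mul {N n : ℕ} (hNn : N = n + n) {α : ℂ} {w : Fin n → ℂ}
    (hw : ∀ z : ℂ, ∏ k : Fin n, (z - α ^ (2 * (k : ℕ))) =
      z ^ n + ∑ i : Fin n, w i * z ^ (i : ℕ)) :
    fromBlocks (sDVM n (α ^ 2)) 0 0 (sDVM n (α ^ 2)) *
        fromBlocks 1 (companion n w ^ n) (diagonal fun l : Fin n => α ^ (l : ℕ))
          (α ^ n • (companion n w ^ n * diagonal fun l : Fin n => α ^ (l : ℕ))) =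
      (of fun j l : Fin N => α ^ (evenOddIndex n j * l)).submatrix
        (finSumFinEquiv.trans (finCongr hNn.symm)) (finSumFinEquiv.trans (finCongr hNn.symm)) := by
  rw [fromBlocks_multiply]
  simp only [Matrix.mul_one, Matrix.zero_mul, add_zero, zero_add]
  rw [Matrix.mul_smul, ← Matrix.mul_assoc, sDVM_sq_mul_companion_pow hw]
  ext (k | k) (l | l) <;>
    simp [sDVM, evenOddIndex, mul_diagonal, ← pow_mul, ← pow_add] <;> ring

theorem sDVM_factorization_general (N n : ℕ)
    (hNn : N = n + n) (α : ℂ) (w : Fin n → ℂ)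
    (hw : ∀ z : ℂ, ∏ k : Fin n, (z - α ^ (2 * (k : ℕ))) =
      z ^ n + ∑ i : Fin n, w i * z ^ (i : ℕ)) :
    sDVM N α =
      (evenOddPerm N n)ᵀ *
        Matrix.reindex (finSumFinEquiv.trans (finCongr hNn.symm))
          (finSumFinEquiv.trans (finCongr hNn.symm))
          (Matrix.fromBlocks (sDVM n (α ^ 2)) 0 0 (sDVM n (α ^ 2))) *
        Matrix.reindex (finSumFinEquiv.trans (finCongr hNn.symm))
          (finSumFinEquiv.trans (finCongr hNn.symm))
          (Matrix.fromBlocks 1 (companion n w ^ n)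
            (Matrix.diagonal fun l : Fin n => α ^ (l : ℕ))
            (α ^ n • (companion n w ^ n * Matrix.diagonal fun l : Fin n => α ^ (l : ℕ)))) := by
  rw [mul_assoc, reindex_apply, reindex_apply, submatrix_mul_equiv, fromBlocks_sDVM_mul hNn hw,
    submatrix_submatrix, Equiv.self_comp_symm, submatrix_id_id]
  exact (evenOddPerm_transpose_mul hNn fun i l => α ^ (i * (l : ℕ))).symm

theorem sDVM_factorization (t : ℕ) (ht : 1 ≤ t) (N n : ℕ) (hN : N = 2 ^ t)
    (hNn : N = n + n) (α : ℂ) (w : Fin n → ℂ)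
    (hw : ∀ z : ℂ, ∏ k : Fin n, (z - α ^ (2 * (k : ℕ))) =
      z ^ n + ∑ i : Fin n, w i * z ^ (i : ℕ)) :
    sDVM N α =
      (evenOddPerm N n)ᵀ *
        Matrix.reindex (finSumFinEquiv.trans (finCongr hNn.symm))
          (finSumFinEquiv.trans (finCongr hNn.symm))
          (Matrix.fromBlocks (sDVM n (α ^ 2)) 0 0 (sDVM n (α ^ 2))) *
        Matrix.reindex (finSumFinEquiv.trans (finCongr hNn.symm))
          (finSumFinEquiv.trans (finCongr hNn.symm))
          (Matrix.fromBlocks 1 (companion n w ^ n)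
            (Matrix.diagonal fun l : Fin n => α ^ (l : ℕ))
            (α ^ n • (companion n w ^ n * Matrix.diagonal fun l : Fin n => α ^ (l : ℕ)))) :=
  sDVM_factorization_general N n hNn α w hw
end

section
/- Let a : ℕ → ℕ satisfy a(1) = 2 and a(t) = 2·a(t−1) + 4^{t−1} + 2^{t−1} for all t ≥ 2. Then for all t ≥ 1, a(t) = (1/2)·(2^t·t + 4^t − 2^t); that is, writing N = 2^t, the number of complex additions of the scaled DVM algorithm is #a(sDVM, N) = (1/2)(N·t + 4^t − N). -/
theorem Nat.eq_of_recurrence {α : Type*} {u v : ℕ → α} (step : ℕ → α → α) (h1 : u 1 = v 1)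
    (hu : ∀ t, 2 ≤ t → u t = step t (u (t - 1)))
    (hv : ∀ t, 2 ≤ t → v t = step t (v (t - 1))) :
    ∀ t, 1 ≤ t → u t = v t := by
  intro t ht
  induction t, ht using Nat.le_induction with
  | base => exact h1
  | succ n hn ih =>
    rw [hu (n + 1) (by omega), hv (n + 1) (by omega), Nat.add_sub_cancel, ih]

def sDVMAdditionClosedForm (t : ℕ) : ℚ := (1 / 2) * (2 ^ t * t + 4 ^ t - 2 ^ t)

theorem sDVMAdditionClosedForm_one : sDVMAdditionClosedForm 1 = 2 := by
  norm_num [sDVMAdditionClosedForm]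

theorem sDVMAdditionClosedForm_succ (t : ℕ) :
    sDVMAdditionClosedForm (t + 1) =
      2 * sDVMAdditionClosedForm t + 4 ^ t + 2 ^ t := by
  simp only [sDVMAdditionClosedForm]
  push_cast
  ring

theorem sDVM_addition_count (a : ℕ → ℕ) (h1 : a 1 = 2)
    (hrec : ∀ t : ℕ, 2 ≤ t → a t = 2 * a (t - 1) + 4 ^ (t - 1) + 2 ^ (t - 1)) :
    ∀ t : ℕ, 1 ≤ t →
      (a t : ℚ) = (1 / 2) * (2 ^ t * t + 4 ^ t - 2 ^ t) := by
  refine Nat.eq_of_recurrence (u := fun t ↦ (a t : ℚ)) (v := sDVMAdditionClosedForm)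
    (fun t x ↦ 2 * x + 4 ^ (t - 1) + 2 ^ (t - 1)) ?_ ?_ ?_
  · simp [h1, sDVMAdditionClosedForm_one]
  · intro t ht
    exact_mod_cast hrec t ht
  · intro t ht
    obtain ⟨s, rfl⟩ : ∃ s, t = s + 1 := ⟨t - 1, by omega⟩
    simpa using sDVMAdditionClosedForm_succ s
end

section
/- Let N = 2^t with t ≥ 1 and let α ∈ ℂ. Then P_N · Ã_{N,α} equals the 2×2 block matrix [[Ã_{N/2,α²}, D̂_{N/2}·Ã_{N/2,α²}], [Ã_{N/2,α²}·D̃_{N/2}, α^{N/2}·D̂_{N/2}·Ã_{N/2,α²}·D̃_{N/2}]], where D̂_{N/2} = diag(α^{kN})_{k=0}^{N/2−1} and D̃_{N/2} = diag(α^l)_{l=0}^{N/2−1}. -/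
open Matrix

/-! For `k < n`, row `k` of `P_N Ã_{N,α}` is row `2k` of `Ã_{N,α}` and row `n + k` is row `2k + 1`.
Splitting the column index as `l` or `n + l`, the four blocks then come from the exponent
identities `2k(n + l) = kN + 2kl` and `(2k + 1)(n + l) = n + kN + 2kl + l`, where `N = n + n`. -/

section
variable {N n : ℕ} {ι : Type*} (M : Matrix (Fin N) ι ℂ)

theorem evenOddPerm_mul_apply_of_val_eq {i v : Fin N}
    (hv : (v : ℕ) = if (i : ℕ) < n then 2 * (i : ℕ) else 2 * ((i : ℕ) - n) + 1) (j : ι) :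
    (evenOddPerm N n * M) i j = M v j := by
  have hrow : ∀ m, evenOddPerm N n i m = if m = v then 1 else 0 := fun m => by
    simp [evenOddPerm, ← hv, Fin.ext_iff]
  simp [mul_apply, hrow]

end

section
variable {n : ℕ} {ι : Type*} (M : Matrix (Fin (n + n)) ι ℂ) (k : Fin n) (j : ι)

theorem evenOddPerm_mul_apply_castAdd :
    (evenOddPerm (n + n) n * M) (Fin.castAdd n k) j = M ⟨2 * k, by omega⟩ j :=
  evenOddPerm_mul_apply_of_val_eq M (by simp) j

theorem evenOddPerm_mul_apply_natAdd :
    (evenOddPerm (n + n) n * M) (Fin.natAdd n k) j = M ⟨2 * k + 1, by omega⟩ j :=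
  evenOddPerm_mul_apply_of_val_eq M (by simp) j

end

theorem evenOddPerm_mul_sDVM_general (N n : ℕ)
    (hNn : N = n + n) (α : ℂ) :
    evenOddPerm N n * sDVM N α =
      Matrix.reindex (finSumFinEquiv.trans (finCongr hNn.symm))
        (finSumFinEquiv.trans (finCongr hNn.symm))
        (Matrix.fromBlocks
          (sDVM n (α ^ 2))
          (Matrix.diagonal (fun k : Fin n => α ^ ((k : ℕ) * N)) * sDVM n (α ^ 2))
          (sDVM n (α ^ 2) * Matrix.diagonal (fun l : Fin n => α ^ (l : ℕ)))
          (α ^ n •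
            (Matrix.diagonal (fun k : Fin n => α ^ ((k : ℕ) * N)) * sDVM n (α ^ 2) *
              Matrix.diagonal (fun l : Fin n => α ^ (l : ℕ))))) := by
  subst hNn
  rw [← Equiv.symm_apply_eq, reindex_symm, reindex_apply]
  ext (k | k) (l | l) <;>
    simp only [submatrix_apply, Equiv.symm_symm, Equiv.trans_apply, finCongr_refl, Equiv.refl_apply,
      finSumFinEquiv_apply_left, finSumFinEquiv_apply_right, evenOddPerm_mul_apply_castAdd,
      evenOddPerm_mul_apply_natAdd, fromBlocks_apply₁₁, fromBlocks_apply₁₂, fromBlocks_apply₂₁,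
      fromBlocks_apply₂₂, Matrix.smul_apply, smul_eq_mul, diagonal_mul, mul_diagonal, sDVM, of_apply,
      Fin.val_castAdd, Fin.val_natAdd]
  all_goals ring

theorem evenOddPerm_mul_sDVM (t : ℕ) (ht : 1 ≤ t) (N n : ℕ) (hN : N = 2 ^ t)
    (hNn : N = n + n) (α : ℂ) :
    evenOddPerm N n * sDVM N α =
      Matrix.reindex (finSumFinEquiv.trans (finCongr hNn.symm))
        (finSumFinEquiv.trans (finCongr hNn.symm))
        (Matrix.fromBlocks
          (sDVM n (α ^ 2))
          (Matrix.diagonal (fun k : Fin n => α ^ ((k : ℕ) * N)) * sDVM n (α ^ 2))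
          (sDVM n (α ^ 2) * Matrix.diagonal (fun l : Fin n => α ^ (l : ℕ)))
          (α ^ n •
            (Matrix.diagonal (fun k : Fin n => α ^ ((k : ℕ) * N)) * sDVM n (α ^ 2) *
              Matrix.diagonal (fun l : Fin n => α ^ (l : ℕ))))) :=
  evenOddPerm_mul_sDVM_general N n hNn α
end
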